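/- arXiv:1704.00813 — 2 statements merged into one kernel-verified Lean document; each statement's English description precedes it below -/
import Mathlib

section
/- Let A be Arnold's cat map on the torus 𝕋² = (ℝ/ℤ)², A(x, y) = (2x + y, x + y) mod 1, with μ the Haar probability measure on 𝕋², and let g₂ = χ_{2,1} + (1/2)·χ_{5,3} + (1/4)·χ_{13,8}. Then the autocovariance sequence of g₂ under the Koopman evolution equals the Fourier coefficients of the spectral density ρ(θ) = (1/2π)(21/16 + (5/4)cos θ + (1/2)cos 2θ): for every n ∈ ℕ, ∫_{𝕋²} g₂ · conj(g₂ ∘ A^n) dμ = (1/2π) ∫₀^{2π} cos(nθ)(21/16 + (5/4)cos θ + (1/2)cos 2θ) dθ; explicitly, the integral equals 21/16 for n = 0, equals 5/8 for n = 1, equals 1/4 for n = 2, and equals 0 for all n ≥ 3. -/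
open MeasureTheory

/-- The character `χ_{k,l}(x, y) = exp(2πi(kx + ly))` on the torus `𝕋² = (ℝ/ℤ)²`. -/
noncomputable def torusChar (k l : ℤ) (p : AddCircle (1 : ℝ) × AddCircle (1 : ℝ)) : ℂ :=
  (AddCircle.toCircle (k • p.1 + l • p.2) : ℂ)

/-- Arnold's cat map `A(x, y) = (2x + y, x + y) mod 1` on the torus `𝕋² = (ℝ/ℤ)²`. -/
noncomputable def catMap (p : AddCircle (1 : ℝ) × AddCircle (1 : ℝ)) :
    AddCircle (1 : ℝ) × AddCircle (1 : ℝ) :=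
  (2 • p.1 + p.2, p.1 + p.2)

/-- The observable `g₂ = χ_{2,1} + (1/2)χ_{5,3} + (1/4)χ_{13,8}` on the torus. -/
noncomputable def catObsTwo (p : AddCircle (1 : ℝ) × AddCircle (1 : ℝ)) : ℂ :=
  torusChar 2 1 p + (1 / 2 : ℂ) * torusChar 5 3 p + (1 / 4 : ℂ) * torusChar 13 8 p

/-
Since `χ_v ∘ A = χ_{Aᵀ v}`, the three characters of `g₂` are consecutive points
`(2,1), (5,3), (13,8)` of the `Aᵀ`-orbit of `(2,1)`, weighted by `c = (1, 1/2, 1/4)`, and composing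
with `Aⁿ` shifts the orbit by `n`. The first coordinate grows strictly along the orbit, so its
frequencies are distinct and orthonormality of characters leaves the autocovariance
`∑ⱼ c_{j+n} c̄ⱼ`. On the other side, orthogonality of `cos (n θ)` on `[0, 2π]` reads off the
cosine coefficients of the density, and both sequences are `21/16, 5/8, 1/4, 0, 0, …`.
-/

open ComplexConjugate Finset

namespace AddCircle

variable {T : ℝ} [hT : Fact (0 < T)]

theorem integral_fourier (m : ℤ) :
    ∫ x : AddCircle T, fourier m x = if m = 0 then (T : ℂ) else 0 := by
  rw [volume_eq_smul_haarAddCircle, integral_smul_measure, ENNReal.toReal_ofReal hT.out.le]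
  split_ifs with hm
  · simp [hm]
  · rw [integral_eq_zero_of_add_right_eq_neg (fourier_add_half_inv_index hm hT.out), smul_zero]

end AddCircle

section Torus

local notation "𝕋²" => AddCircle (1 : ℝ) × AddCircle (1 : ℝ)

local instance : Fact ((0 : ℝ) < 1) := ⟨one_pos⟩

theorem torusChar_apply (k l : ℤ) (p : 𝕋²) :
    torusChar k l p = fourier k p.1 * fourier l p.2 := by
  simp [torusChar, AddCircle.toCircle_add, fourier_apply]

theorem continuous_torusChar (k l : ℤ) : Continuous (torusChar k l) := by
  simp only [funext (torusChar_apply k l)]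
  fun_prop

theorem integrable_torusChar (k l : ℤ) : Integrable (torusChar k l) := by
  refine (integrable_const (1 : ℝ)).mono' (continuous_torusChar k l).aestronglyMeasurable ?_
  filter_upwards with p
  simp [torusChar, Circle.norm_coe]

theorem integral_torusChar (k l : ℤ) :
    ∫ p : 𝕋², torusChar k l p = if k = 0 ∧ l = 0 then 1 else 0 := by
  simp only [torusChar_apply, Measure.volume_eq_prod]
  rw [integral_prod_mul (fun x => (fourier k x : ℂ)) (fun y => (fourier l y : ℂ)),
    AddCircle.integral_fourier, AddCircle.integral_fourier]
  split_ifs <;> simp_all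

theorem torusChar_mul_conj (k l k' l' : ℤ) (p : 𝕋²) :
    torusChar k l p * conj (torusChar k' l' p) = torusChar (k - k') (l - l') p := by
  simp only [torusChar_apply, map_mul, ← fourier_neg, sub_eq_add_neg, fourier_add]
  ring

/-- The transpose of the cat matrix, acting on frequencies: `χ_v ∘ A = χ_{catFreq v}`. -/
def catFreq (v : ℤ × ℤ) : ℤ × ℤ := (2 * v.1 + v.2, v.1 + v.2)

theorem torusChar_catMap (k l : ℤ) (p : 𝕋²) :
    torusChar k l (catMap p) = torusChar (catFreq (k, l)).1 (catFreq (k, l)).2 p := by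
  have h : k • (2 • p.1 + p.2) + l • (p.1 + p.2) = (2 * k + l) • p.1 + (k + l) • p.2 := by
    rw [← Nat.cast_smul_eq_nsmul ℤ 2 p.1]
    simp only [smul_add, smul_smul, add_smul, Nat.cast_ofNat, mul_comm k]
    abel
  simp only [torusChar, catMap, catFreq, h]

/-- `χ_v ∘ Aⁿ`. -/
noncomputable def orbitChar (v : ℤ × ℤ) (n : ℕ) (p : 𝕋²) : ℂ :=
  torusChar (catFreq^[n] v).1 (catFreq^[n] v).2 p

theorem orbitChar_catMap_iterate (v : ℤ × ℤ) (m n : ℕ) (p : 𝕋²) :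
    orbitChar v m (catMap^[n] p) = orbitChar v (m + n) p := by
  induction n generalizing p with
  | zero => rfl
  | succ n ih =>
    rw [Function.iterate_succ_apply, ih, orbitChar, torusChar_catMap, orbitChar,
      ← Function.iterate_succ_apply' catFreq]
    rfl

theorem injective_catFreq_iterate {v : ℤ × ℤ} (h₁ : 0 < v.1) (h₂ : 0 ≤ v.2) :
    Function.Injective fun n => catFreq^[n] v := by
  have pos : ∀ n, 0 < (catFreq^[n] v).1 ∧ 0 ≤ (catFreq^[n] v).2 := by
    intro n
    induction n with
    | zero => exact ⟨h₁, h₂⟩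
    | succ n ih =>
      rw [Function.iterate_succ_apply', catFreq]
      constructor <;> dsimp only <;> omega
  have fst_strictMono : StrictMono fun n => (catFreq^[n] v).1 := by
    refine strictMono_nat_of_lt_succ fun n => ?_
    have := pos n
    rw [Function.iterate_succ_apply' catFreq, catFreq]
    dsimp only
    omega
  exact fst_strictMono.injective.of_comp

theorem integral_orbitChar_mul_conj {v : ℤ × ℤ} (hv : Function.Injective fun n => catFreq^[n] v)
    (a b : ℕ) :
    ∫ p, orbitChar v a p * conj (orbitChar v b p) = if a = b then 1 else 0 := by
  simp only [orbitChar, torusChar_mul_conj, integral_torusChar, sub_eq_zero, ← Prod.ext_iff,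
    hv.eq_iff]

theorem integrable_orbitChar_mul_conj (v : ℤ × ℤ) (a b : ℕ) :
    Integrable fun p => orbitChar v a p * conj (orbitChar v b p) := by
  simp only [orbitChar, torusChar_mul_conj]
  exact integrable_torusChar _ _

theorem integral_orbitSum_mul_conj_iterate {v : ℤ × ℤ}
    (hv : Function.Injective fun n => catFreq^[n] v) (c : ℕ → ℂ) (N n : ℕ) :
    ∫ p, (∑ i ∈ range N, c i * orbitChar v i p) *
        conj (∑ j ∈ range N, c j * orbitChar v j (catMap^[n] p)) =
      ∑ j ∈ range (N - n), c (j + n) * conj (c j) := by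
  have expand : ∀ p, (∑ i ∈ range N, c i * orbitChar v i p) *
      conj (∑ j ∈ range N, c j * orbitChar v j (catMap^[n] p)) =
      ∑ j ∈ range N, ∑ i ∈ range N,
        c i * conj (c j) * (orbitChar v i p * conj (orbitChar v (j + n) p)) := by
    intro p
    simp only [orbitChar_catMap_iterate, map_sum, map_mul, sum_mul_sum]
    rw [sum_comm]
    exact sum_congr rfl fun _ _ => sum_congr rfl fun _ _ => by ring
  have lags : (range N).filter (fun j => j + n ∈ range N) = range (N - n) := by
    ext j
    simp only [mem_filter, mem_range]
    omega
  have term : ∀ i j,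
      ∫ p, c i * conj (c j) * (orbitChar v i p * conj (orbitChar v (j + n) p)) =
        if i = j + n then c i * conj (c j) else 0 := by
    intro i j
    rw [integral_const_mul, integral_orbitChar_mul_conj hv, mul_ite, mul_one, mul_zero]
  simp only [expand]
  rw [integral_finsetSum _ fun j _ => integrable_finsetSum _ fun i _ =>
    (integrable_orbitChar_mul_conj v i (j + n)).const_mul _]
  simp only [fun j => integral_finsetSum (range N) fun i _ =>
    (integrable_orbitChar_mul_conj v i (j + n)).const_mul (c i * conj (c j)),
    term, sum_ite_eq', ← sum_filter, lags]

theorem catObsTwo_eq_orbitSum (p : 𝕋²) :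
    catObsTwo p = ∑ i ∈ range 3, (1 / 2 : ℂ) ^ i * orbitChar (2, 1) i p := by
  norm_num [catObsTwo, orbitChar, catFreq, sum_range_succ]

/-- The autocovariances of `g₂`, which are also the cosine coefficients of its spectral density. -/
noncomputable def catSpectralCoeff : ℕ → ℝ
  | 0 => 21 / 16
  | 1 => 5 / 8
  | 2 => 1 / 4
  | _ + 3 => 0

theorem integral_catObsTwo_mul_conj_iterate (n : ℕ) :
    ∫ p, catObsTwo p * conj (catObsTwo (catMap^[n] p)) = catSpectralCoeff n := by
  simp only [catObsTwo_eq_orbitSum]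
  rw [integral_orbitSum_mul_conj_iterate (injective_catFreq_iterate (by norm_num) (by norm_num))]
  match n with
  | 0 | 1 | 2 => norm_num [sum_range_succ, catSpectralCoeff, map_ofNat]
  | n + 3 => simp [catSpectralCoeff]

end Torus

open Real

theorem integral_cos_int_mul (m : ℤ) :
    ∫ θ in (0 : ℝ)..2 * π, cos (m * θ) = if m = 0 then 2 * π else 0 := by
  split_ifs with hm
  · simp [hm]
  have hm' : (m : ℝ) ≠ 0 := Int.cast_ne_zero.mpr hm
  rw [intervalIntegral.integral_comp_mul_left cos hm', integral_cos, mul_zero, sin_zero,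
    show (m : ℝ) * (2 * π) = ((2 * m : ℤ) : ℝ) * π by push_cast; ring, sin_int_mul_pi,
    sub_zero, smul_zero]

theorem integral_cos_nat_mul_mul_cos (n m : ℕ) :
    ∫ θ in (0 : ℝ)..2 * π, cos (n * θ) * cos (m * θ) =
      π * ((if n = m then 1 else 0) + if n + m = 0 then 1 else 0) := by
  have product_to_sum : ∀ θ : ℝ, cos (n * θ) * cos (m * θ) =
      cos (((n - m : ℤ) : ℝ) * θ) / 2 + cos (((n + m : ℤ) : ℝ) * θ) / 2 := by
    intro θ
    push_cast
    rw [sub_mul, add_mul, cos_sub, cos_add]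
    ring
  have hcos : ∀ k : ℤ, IntervalIntegrable (fun θ => cos (k * θ) / 2) volume 0 (2 * π) :=
    fun k => (by fun_prop : Continuous fun θ : ℝ => cos (k * θ) / 2).intervalIntegrable _ _
  simp only [product_to_sum]
  rw [intervalIntegral.integral_add (hcos _) (hcos _), intervalIntegral.integral_div,
    intervalIntegral.integral_div, integral_cos_int_mul, integral_cos_int_mul]
  have h₁ : (n : ℤ) - m = 0 ↔ n = m := by omega
  have h₂ : (n : ℤ) + m = 0 ↔ n + m = 0 := by omega
  simp only [h₁, h₂]
  split_ifs <;> ring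

theorem cosCoeff_catSpectralDensity (n : ℕ) :
    1 / (2 * π) * ∫ θ in (0 : ℝ)..2 * π,
      cos (n * θ) * (21 / 16 + 5 / 4 * cos θ + 1 / 2 * cos (2 * θ)) = catSpectralCoeff n := by
  have expand : ∀ θ : ℝ, cos (n * θ) * (21 / 16 + 5 / 4 * cos θ + 1 / 2 * cos (2 * θ)) =
      21 / 16 * (cos (n * θ) * cos ((0 : ℕ) * θ)) + 5 / 4 * (cos (n * θ) * cos ((1 : ℕ) * θ)) +
        1 / 2 * (cos (n * θ) * cos ((2 : ℕ) * θ)) := by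
    intro θ
    simp only [Nat.cast_zero, Nat.cast_one, Nat.cast_ofNat, zero_mul, cos_zero, one_mul]
    ring
  have hcos : ∀ (c : ℝ) (m : ℕ),
      IntervalIntegrable (fun θ => c * (cos (n * θ) * cos (m * θ))) volume 0 (2 * π) :=
    fun c m => (by fun_prop : Continuous fun θ : ℝ => c * (cos (n * θ) * cos (m * θ)))
      |>.intervalIntegrable _ _
  simp only [expand]
  rw [intervalIntegral.integral_add ((hcos _ _).add (hcos _ _)) (hcos _ _),
    intervalIntegral.integral_add (hcos _ _) (hcos _ _)]
  simp only [intervalIntegral.integral_const_mul, integral_cos_nat_mul_mul_cos]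
  match n with
  | 0 | 1 | 2 => norm_num [catSpectralCoeff]; field_simp <;> norm_num
  | n + 3 => simp [catSpectralCoeff]

/-- For the observable `g₂ = χ_{2,1} + (1/2)χ_{5,3} + (1/4)χ_{13,8}` on the torus (with Haar
probability measure `volume`), the autocovariance sequence under Arnold's cat map equals
the Fourier coefficients of the spectral density
`ρ(θ) = (1/2π)(21/16 + (5/4)cos θ + (1/2)cos 2θ)`; explicitly it is `21/16` at lag `0`,
`5/8` at lag `1`, `1/4` at lag `2`, and `0` at all lags `n ≥ 3`. -/
theorem catMap_autocovariance_g2 :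
    (∀ n : ℕ,
      ∫ p, catObsTwo p * (starRingEnd ℂ) (catObsTwo (catMap^[n] p)) ∂volume =
        (((1 / (2 * Real.pi)) *
          ∫ θ in (0 : ℝ)..(2 * Real.pi),
            Real.cos (n * θ) * (21 / 16 + (5 / 4) * Real.cos θ + (1 / 2) * Real.cos (2 * θ)) :
          ℝ) : ℂ)) ∧
    (∀ n : ℕ,
      (n = 0 →
        ∫ p, catObsTwo p * (starRingEnd ℂ) (catObsTwo (catMap^[n] p)) ∂volume = 21 / 16) ∧
      (n = 1 →
        ∫ p, catObsTwo p * (starRingEnd ℂ) (catObsTwo (catMap^[n] p)) ∂volume = 5 / 8) ∧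
      (n = 2 →
        ∫ p, catObsTwo p * (starRingEnd ℂ) (catObsTwo (catMap^[n] p)) ∂volume = 1 / 4) ∧
      (3 ≤ n →
        ∫ p, catObsTwo p * (starRingEnd ℂ) (catObsTwo (catMap^[n] p)) ∂volume = 0)) := by
  refine ⟨fun n => by rw [integral_catObsTwo_mul_conj_iterate, cosCoeff_catSpectralDensity],
    fun n => ?_⟩
  simp only [integral_catObsTwo_mul_conj_iterate]
  refine ⟨?_, ?_, ?_, fun hn => ?_⟩
  · rintro rfl; norm_num [catSpectralCoeff]
  · rintro rfl; norm_num [catSpectralCoeff]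
  · rintro rfl; norm_num [catSpectralCoeff]
  obtain ⟨m, rfl⟩ := Nat.exists_eq_add_of_le' hn
  simp [catSpectralCoeff]
end

section
/- Let f : ℝ → ℂ be continuous and 2π-periodic, let ω > 0, j ∈ ℤ, and a ∈ ℝ. Then the harmonic average at frequency jω of the traveling-wave signal t ↦ f(ωt − a) exists and equals e^{-ija} · ĉ_j, where ĉ_j = (1/2π) ∫₀^{2π} f(s) e^{-ijs} ds is the j-th Fourier coefficient of f: that is, (1/T) ∫₀^T f(ωt − a) e^{-ijωt} dt → e^{-ija} ĉ_j as T → ∞. In particular, taking a = 2πkx, the Koopman mode at frequency jω of a traveling wave f(ωt − 2πkx) is the spatial profile x ↦ ĉ_j e^{-2πijkx}, so the mode at the j-th harmonic of the basic frequency carries the j-th multiple of the basic wave number k. -/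
/-!
With `g s = f s * e^{-ijs}`, again `2π`-periodic, the integrand is `e^{-ija} g(ωt - a)`, so the
claim is that the time average of the periodic signal `t ↦ g(ωt - a)` is the mean of `g` over a
period. For a `p`-periodic `h`, the primitive `∫₀^T h` minus its linear drift `(T/p) ∫₀^p h` is
continuous and `p`-periodic, hence bounded, so after division by `T` only the mean survives.
-/

open Filter intervalIntegral MeasureTheory

namespace Function.Periodic

variable {E : Type*} [NormedAddCommGroup E] [NormedSpace ℝ E] {h : ℝ → E} {p : ℝ}

theorem periodic_primitive_sub_smul_integral (hh : Periodic h p) (hp : p ≠ 0)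
    (h_int : IntervalIntegrable h volume 0 p) :
    Periodic (fun T => (∫ t in 0..T, h t) - (T / p) • ∫ t in 0..p, h t) p := by
  intro T
  simp only [hh.intervalIntegral_add_eq_add 0 T (hh.intervalIntegrable₀ hp h_int), zero_add,
    add_div, div_self hp, add_smul, one_smul]
  abel

theorem tendsto_average_intervalIntegral (hh : Periodic h p) (hp : p ≠ 0)
    (h_int : IntervalIntegrable h volume 0 p) :
    Tendsto (fun T => T⁻¹ • ∫ t in 0..T, h t) atTop (nhds (p⁻¹ • ∫ t in 0..p, h t)) := by
  set D : ℝ → E := fun T => (∫ t in 0..T, h t) - (T / p) • ∫ t in 0..p, h t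
  have hD_bdd : Bornology.IsBounded (Set.range D) :=
    (hh.periodic_primitive_sub_smul_integral hp h_int).isBounded_of_continuous hp <|
      (continuous_primitive (hh.intervalIntegrable₀ hp h_int) 0).sub (by fun_prop)
  obtain ⟨C, hC⟩ := hD_bdd.exists_norm_le
  have hD_small : Tendsto (fun T => T⁻¹ • D T) atTop (nhds 0) :=
    tendsto_inv_atTop_zero.zero_smul_isBoundedUnder_le
      ⟨C, eventually_map.2 (Eventually.of_forall fun T => hC _ ⟨T, rfl⟩)⟩
  refine (zero_add (p⁻¹ • ∫ t in 0..p, h t) ▸ hD_small.add_const _).congr' ?_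
  filter_upwards [eventually_ne_atTop 0] with T hT
  simp only [D, smul_sub, smul_smul, div_eq_mul_inv]
  rw [← mul_assoc, inv_mul_cancel₀ hT, one_mul, sub_add_cancel]

theorem intervalIntegral_comp_mul_sub (hh : Periodic h p) {ω : ℝ} (hω : ω ≠ 0) (a : ℝ) :
    ∫ t in 0..ω⁻¹ * p, h (ω * t - a) = ω⁻¹ • ∫ s in 0..p, h s := by
  rw [intervalIntegral.integral_comp_mul_sub _ hω, mul_zero, zero_sub, mul_inv_cancel_left₀ hω,
    sub_eq_neg_add, hh.intervalIntegral_add_eq (-a) 0, zero_add]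

theorem tendsto_average_intervalIntegral_comp_mul_sub (hh : Periodic h p) (hp : p ≠ 0)
    (h_int : IntervalIntegrable h volume 0 p) {ω : ℝ} (hω : ω ≠ 0) (a : ℝ) :
    Tendsto (fun T => T⁻¹ • ∫ t in 0..T, h (ω * t - a)) atTop
      (nhds (p⁻¹ • ∫ s in 0..p, h s)) := by
  have hh' : Periodic (fun t => h (ω * t - a)) (ω⁻¹ * p) := (hh.sub_const a).const_mul ω
  have h_int' : IntervalIntegrable (fun t => h (ω * t - a)) volume 0 (ω⁻¹ * p) := by
    simpa [div_eq_inv_mul] using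
      ((hh.intervalIntegrable₀ hp h_int (-a) (p - a)).comp_sub_right a).comp_mul_left (c := ω)
  have := hh'.tendsto_average_intervalIntegral (mul_ne_zero (inv_ne_zero hω) hp) h_int'
  rw [hh.intervalIntegral_comp_mul_sub hω, smul_smul] at this
  convert this using 3
  field_simp

end Function.Periodic

theorem Complex.periodic_exp_neg_int_mul_mul_I (j : ℤ) :
    Function.Periodic (fun s : ℝ => Complex.exp (-((j : ℝ) * s) * Complex.I)) (2 * Real.pi) := by
  intro s
  have : -(((j : ℝ) : ℂ) * ((s + 2 * Real.pi : ℝ) : ℂ)) * Complex.I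
      = -(((j : ℝ) : ℂ) * (s : ℂ)) * Complex.I + (-j : ℤ) * (2 * Real.pi * Complex.I) := by
    push_cast; ring
  simp only [this, Complex.exp_add, Complex.exp_int_mul_two_pi_mul_I, mul_one]

/-- The Koopman mode of a traveling wave: for `f` continuous and `2π`-periodic, `ω > 0`,
`j ∈ ℤ` and `a ∈ ℝ`, the harmonic average at frequency `jω` of the signal
`t ↦ f(ωt − a)` exists and equals `e^{-ija} ĉ_j`, where
`ĉ_j = (1/2π) ∫₀^{2π} f(s) e^{-ijs} ds` is the `j`-th Fourier coefficient of `f`.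
(Taking `a = 2πkx`, the Koopman mode at the `j`-th harmonic of the basic frequency is
`x ↦ ĉ_j e^{-2πijkx}`, carrying the `j`-th multiple of the basic wave number.) -/
theorem harmonic_average_of_traveling_wave
    (f : ℝ → ℂ) (hf_cont : Continuous f) (hf_per : Function.Periodic f (2 * Real.pi))
    (ω : ℝ) (hω : 0 < ω) (j : ℤ) (a : ℝ) :
    Tendsto
      (fun T : ℝ => (1 / (T : ℂ)) *
        ∫ t in (0 : ℝ)..T, f (ω * t - a) * Complex.exp (-((j : ℝ) * ω * t) * Complex.I))
      atTop
      (nhds (Complex.exp (-((j : ℝ) * a) * Complex.I) *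
        ((1 / (2 * Real.pi : ℂ)) *
          ∫ s in (0 : ℝ)..(2 * Real.pi), f s * Complex.exp (-((j : ℝ) * s) * Complex.I)))) := by
  set g : ℝ → ℂ := fun s => f s * Complex.exp (-((j : ℝ) * s) * Complex.I)
  have hg_per : Function.Periodic g (2 * Real.pi) :=
    hf_per.mul (Complex.periodic_exp_neg_int_mul_mul_I j)
  have hg_int : IntervalIntegrable g volume 0 (2 * Real.pi) :=
    (hf_cont.mul (by fun_prop)).intervalIntegrable _ _
  have hphase (t : ℝ) : f (ω * t - a) * Complex.exp (-((j : ℝ) * ω * t) * Complex.I)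
      = Complex.exp (-((j : ℝ) * a) * Complex.I) * g (ω * t - a) := by
    simp only [g, ← mul_assoc, mul_comm _ (f _), mul_assoc (f _), ← Complex.exp_add]
    congr 2
    push_cast
    ring
  have haverage := (hg_per.tendsto_average_intervalIntegral_comp_mul_sub Real.two_pi_pos.ne'
    hg_int hω.ne' a).const_mul (Complex.exp (-((j : ℝ) * a) * Complex.I))
  convert haverage using 2 with T
  · simp only [hphase, intervalIntegral.integral_const_mul, Complex.real_smul, Complex.ofReal_inv]
    ring
  · simp [Complex.real_smul]
end
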